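/- A nonempty QS-order qso is a QSO-stratum (i.e., of the form qso'[x] for some QS-order qso' and fresh x) if and only if there exists x in its domain such that x is incomparable under ≺ with every other element of the domain. -/
import Mathlib


/-- Quasi-stratified orders: the smallest class of (finite domain, relation) pairs
containing (∅,∅), closed under adding a fresh unordered element, and under
sequential composition of disjoint-domain QS-orders. -/
inductive QSO {α : Type*} [DecidableEq α] : Finset α → (α → α → Prop) → Prop
  | empty : QSO ∅ (fun _ _ => False)
  | add {Δ : Finset α} {r : α → α → Prop} (x : α) (hx : x ∉ Δ) :
      QSO Δ r → QSO (insert x Δ) r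
  | comp {Δ Δ' : Finset α} {r r' : α → α → Prop} (hd : Disjoint Δ Δ') :
      QSO Δ r → QSO Δ' r' →
      QSO (Δ ∪ Δ') (fun a b => r a b ∨ r' a b ∨ (a ∈ Δ ∧ b ∈ Δ'))

/-- A QSO-stratum: a QS-order of the form qso'[x] for a QS-order qso' and fresh x. -/
def IsQSOStratum {α : Type*} [DecidableEq α] (Δ : Finset α) (r : α → α → Prop) : Prop :=
  ∃ (Δ' : Finset α) (x : α), x ∉ Δ' ∧ QSO Δ' r ∧ Δ = insert x Δ'

lemma QSO.support {α : Type*} [DecidableEq α] {Δ : Finset α} {r : α → α → Prop}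
    (h : QSO Δ r) : ∀ a b, r a b → a ∈ Δ ∧ b ∈ Δ := by
  induction h with
  | empty => intro a b hab; exact hab.elim
  | add x hx _ ih =>
    intro a b hab
    exact ⟨Finset.mem_insert_of_mem (ih a b hab).1, Finset.mem_insert_of_mem (ih a b hab).2⟩
  | comp hd _ _ ih ih' =>
    intro a b hab
    rcases hab with hab | hab | ⟨ha, hb⟩
    · exact ⟨Finset.mem_union_left _ (ih a b hab).1, Finset.mem_union_left _ (ih a b hab).2⟩
    · exact ⟨Finset.mem_union_right _ (ih' a b hab).1, Finset.mem_union_right _ (ih' a b hab).2⟩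
    · exact ⟨Finset.mem_union_left _ ha, Finset.mem_union_right _ hb⟩

lemma QSO.stratum_of_incomp {α : Type*} [DecidableEq α] {Δ : Finset α} {r : α → α → Prop}
    (h : QSO Δ r) :
    ∀ x ∈ Δ, (∀ z ∈ Δ, z ≠ x → ¬ r x z ∧ ¬ r z x) → IsQSOStratum Δ r := by
  induction h with
  | empty => intro x hx; exact absurd hx (Finset.notMem_empty x)
  | @add Δ₀ r y hy q ih =>
    intro x hx hinc
    rcases Finset.mem_insert.mp hx with rfl | hx₀
    · exact ⟨Δ₀, x, hy, q, rfl⟩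
    · have hxy : x ≠ y := fun he => hy (he ▸ hx₀)
      obtain ⟨Δ'', x', hx', q'', hΔ⟩ := ih x hx₀ (fun z hz hzx =>
        hinc z (Finset.mem_insert_of_mem hz) hzx)
      have hyΔ'' : y ∉ Δ'' := fun hm => hy (hΔ ▸ Finset.mem_insert_of_mem hm)
      have hx'y : x' ≠ y := fun he => hy (hΔ ▸ he ▸ Finset.mem_insert_self x' Δ'')
      refine ⟨insert y Δ'', x', ?_, QSO.add y hyΔ'' q'', ?_⟩
      · intro hm
        rcases Finset.mem_insert.mp hm with he | hm'
        · exact hx'y he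
        · exact hx' hm'
      · rw [hΔ, Finset.insert_comm]
  | @comp Δ₁ Δ₂ r₁ r₂ hd q₁ q₂ ih₁ ih₂ =>
    intro x hx hinc
    rcases Finset.mem_union.mp hx with hx₁ | hx₂
    · -- Δ₂ must be empty
      have hΔ₂ : Δ₂ = ∅ := by
        by_contra hne2
        obtain ⟨z, hz⟩ := Finset.nonempty_iff_ne_empty.mpr hne2
        have hzx : z ≠ x := fun he => (Finset.disjoint_left.mp hd hx₁) (he ▸ hz)
        exact (hinc z (Finset.mem_union_right _ hz) hzx).1 (Or.inr (Or.inr ⟨hx₁, hz⟩))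
      subst hΔ₂
      have hr : (fun a b => r₁ a b ∨ r₂ a b ∨ (a ∈ Δ₁ ∧ b ∈ (∅ : Finset α))) = r₁ := by
        funext a b
        apply propext
        constructor
        · rintro (h | h | ⟨_, hb⟩)
          · exact h
          · exact absurd (q₂.support a b h).1 (Finset.notMem_empty a)
          · exact absurd hb (Finset.notMem_empty b)
        · exact Or.inl
      rw [Finset.union_empty] at *
      rw [hr] at hinc ⊢
      exact ih₁ x hx₁ hinc
    · have hΔ₁ : Δ₁ = ∅ := by
        by_contra hne1
        obtain ⟨z, hz⟩ := Finset.nonempty_iff_ne_empty.mpr hne1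
        have hzx : z ≠ x := fun he => (Finset.disjoint_right.mp hd hx₂) (he ▸ hz)
        exact (hinc z (Finset.mem_union_left _ hz) hzx).2 (Or.inr (Or.inr ⟨hz, hx₂⟩))
      subst hΔ₁
      have hr : (fun a b => r₁ a b ∨ r₂ a b ∨ (a ∈ (∅ : Finset α) ∧ b ∈ Δ₂)) = r₂ := by
        funext a b
        apply propext
        constructor
        · rintro (h | h | ⟨ha, _⟩)
          · exact absurd (q₁.support a b h).1 (Finset.notMem_empty a)
          · exact h
          · exact absurd ha (Finset.notMem_empty a)
        · exact fun h => Or.inr (Or.inl h)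
      rw [Finset.empty_union] at *
      rw [hr] at hinc ⊢
      exact ih₂ x hx₂ hinc

/-- A nonempty QS-order is a QSO-stratum iff some element of its
domain is incomparable with every other element of the domain. -/
theorem stratum_iff {α : Type*} [DecidableEq α]
    (Δ : Finset α) (r : α → α → Prop) (h : QSO Δ r) (hne : Δ.Nonempty) :
    IsQSOStratum Δ r ↔ ∃ x ∈ Δ, ∀ z ∈ Δ, z ≠ x → ¬ r x z ∧ ¬ r z x := by
  constructor
  · rintro ⟨Δ', x, hx, q, rfl⟩
    refine ⟨x, Finset.mem_insert_self x Δ', fun z hz hzx => ?_⟩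
    constructor
    · intro hr; exact hx (q.support x z hr).1
    · intro hr; exact hx (q.support z x hr).2
  · rintro ⟨x, hx, hinc⟩
    exact h.stratum_of_incomp x hx hinc
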